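/- arXiv:2003.10232 — 2 statements merged into one kernel-verified Lean document; each statement's English description precedes it below -/
import Mathlib

section
/- For any two connected finite simple graphs G and H, each with at least one edge, χ'_dom(G + H) ≤ χ'_dom(G) + χ'_dom(H) + ⌈(|V(G)|·|V(H)|)/2⌉. -/
open SimpleGraph

/-- Two edges of a simple graph are adjacent if they are distinct and share an endpoint. -/
def EdgeAdj {V : Type*} (G : SimpleGraph V) (e f : G.edgeSet) : Prop :=
  e ≠ f ∧ ∃ v, v ∈ (e : Sym2 V) ∧ v ∈ (f : Sym2 V)

/-- A dominated edge coloring of `G` with colors in `Fin n`: a proper edge coloring such that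
every color class is dominated by some edge. -/
def IsDomEdgeColoring {V : Type*} (G : SimpleGraph V) {n : ℕ} (c : G.edgeSet → Fin n) : Prop :=
  (∀ e f, EdgeAdj G e f → c e ≠ c f) ∧
  (∀ i : Fin n, ∃ e : G.edgeSet, ∀ f, c f = i → f = e ∨ EdgeAdj G e f)

/-- The dominated edge chromatic number: the least number of colors in a
dominated edge coloring. -/
noncomputable def domEdgeChrom {V : Type*} (G : SimpleGraph V) : ℕ :=
  sInf {n | ∃ c : G.edgeSet → Fin n, IsDomEdgeColoring G c}

/-- `D` is a total edge dominating set: every edge of `G` is adjacent to an edge of `D`. -/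
def IsTotalEdgeDom {V : Type*} (G : SimpleGraph V) (D : Set G.edgeSet) : Prop :=
  ∀ e : G.edgeSet, ∃ f ∈ D, EdgeAdj G e f

/-- The total edge domination number of `G`. -/
noncomputable def totalEdgeDomNumber {V : Type*} (G : SimpleGraph V) : ℕ :=
  sInf {n | ∃ D : Set G.edgeSet, D.Finite ∧ D.ncard = n ∧ IsTotalEdgeDom G D}

/-- The join `G + H` of two graphs: disjoint union together with all edges between them. -/
def graphJoin {α β : Type*} (G : SimpleGraph α) (H : SimpleGraph β) :
    SimpleGraph (α ⊕ β) :=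
  SimpleGraph.fromRel (fun a b =>
    match a, b with
    | .inl u, .inl v => G.Adj u v
    | .inr u, .inr v => H.Adj u v
    | .inl _, .inr _ => True
    | .inr _, .inl _ => False)

section JoinAPI
variable {α β : Type*} (G : SimpleGraph α) (H : SimpleGraph β)

lemma joinAdj_ll {u v : α} : (graphJoin G H).Adj (.inl u) (.inl v) ↔ G.Adj u v := by
  simp only [graphJoin, SimpleGraph.fromRel_adj]
  constructor
  · rintro ⟨h1, h2 | h2⟩
    · exact h2
    · exact h2.symm
  · intro h
    exact ⟨by simpa using h.ne, Or.inl h⟩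

lemma joinAdj_rr {u v : β} : (graphJoin G H).Adj (.inr u) (.inr v) ↔ H.Adj u v := by
  simp only [graphJoin, SimpleGraph.fromRel_adj]
  constructor
  · rintro ⟨h1, h2 | h2⟩
    · exact h2
    · exact h2.symm
  · intro h
    exact ⟨by simpa using h.ne, Or.inl h⟩

lemma joinAdj_lr (u : α) (v : β) : (graphJoin G H).Adj (.inl u) (.inr v) := by
  simp [graphJoin, SimpleGraph.fromRel_adj]

lemma join_edge_cases (e : (graphJoin G H).edgeSet) :
    (∃ u v, G.Adj u v ∧ (e : Sym2 (α ⊕ β)) = s(.inl u, .inl v)) ∨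
    (∃ u v, H.Adj u v ∧ (e : Sym2 (α ⊕ β)) = s(.inr u, .inr v)) ∨
    (∃ u v, (e : Sym2 (α ⊕ β)) = s(.inl u, .inr v)) := by
  obtain ⟨e, he⟩ := e
  induction e using Sym2.ind with
  | _ x y =>
    match x, y with
    | .inl u, .inl v =>
      exact Or.inl ⟨u, v, (joinAdj_ll G H).mp ((SimpleGraph.mem_edgeSet _).mp he), rfl⟩
    | .inr u, .inr v =>
      exact Or.inr (Or.inl ⟨u, v, (joinAdj_rr G H).mp ((SimpleGraph.mem_edgeSet _).mp he), rfl⟩)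
    | .inl u, .inr v => exact Or.inr (Or.inr ⟨u, v, rfl⟩)
    | .inr u, .inl v => exact Or.inr (Or.inr ⟨v, u, Sym2.eq_swap⟩)

lemma edge_repr {V : Type*} {G : SimpleGraph V} (e : G.edgeSet) :
    ∃ u v, G.Adj u v ∧ (e : Sym2 V) = s(u, v) := by
  obtain ⟨e, he⟩ := e
  induction e using Sym2.ind with
  | _ x y => exact ⟨x, y, (SimpleGraph.mem_edgeSet _).mp he, rfl⟩

end JoinAPI

/-- existence of some dominated edge coloring on a finite graph -/
lemma exists_optimal {V : Type*} [Finite V] (G : SimpleGraph V) :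
    ∃ c : G.edgeSet → Fin (domEdgeChrom G), IsDomEdgeColoring G c := by
  have hfin : Finite G.edgeSet := by
    have : Finite (Sym2 V) := by infer_instance
    exact Subtype.finite
  have hF : Fintype G.edgeSet := Fintype.ofFinite _
  have hne : {n | ∃ c : G.edgeSet → Fin n, IsDomEdgeColoring G c}.Nonempty := by
    refine ⟨Fintype.card G.edgeSet, Fintype.equivFin G.edgeSet, ?_, ?_⟩
    · intro e f hef h
      exact hef.1 ((Fintype.equivFin G.edgeSet).injective h)
    · intro i
      refine ⟨(Fintype.equivFin G.edgeSet).symm i, fun f hf => Or.inl ?_⟩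
      rw [← hf]; simp
  exact Nat.sInf_mem hne
/-- index of cell (i,j) -/
def jidx (m n i j : ℕ) : ℕ := i + ((j + (n - i % 2)) % n) * m

def jrow (m k : ℕ) : ℕ := k % m

def jcol (m n k : ℕ) : ℕ := (k / m + (k % m) % 2) % n

lemma jidx_lt {m n i j : ℕ} (hi : i < m) (hn : 0 < n) : jidx m n i j < m * n := by
  have hc : (j + (n - i % 2)) % n < n := Nat.mod_lt _ hn
  calc i + ((j + (n - i % 2)) % n) * m < m + ((j + (n - i % 2)) % n) * m := by omega
    _ = (((j + (n - i % 2)) % n) + 1) * m := by ring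
    _ ≤ n * m := Nat.mul_le_mul_right m (by omega)
    _ = m * n := Nat.mul_comm _ _

lemma jrow_jidx {m n i j : ℕ} (hi : i < m) : jrow m (jidx m n i j) = i := by
  unfold jrow jidx
  rw [Nat.add_mul_mod_self_right, Nat.mod_eq_of_lt hi]

lemma jdiv_jidx {m n i j : ℕ} (hi : i < m) :
    jidx m n i j / m = (j + (n - i % 2)) % n := by
  unfold jidx
  rw [Nat.add_mul_div_right _ _ (by omega : 0 < m), Nat.div_eq_of_lt hi, Nat.zero_add]

lemma jcol_jidx {m n i j : ℕ} (hi : i < m) (hj : j < n) : jcol m n (jidx m n i j) = j := by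
  unfold jcol
  have hmod : jidx m n i j % m = i := jrow_jidx hi
  rw [jdiv_jidx hi, hmod, Nat.mod_add_mod]
  have h2 : i % 2 < 2 := Nat.mod_lt _ (by norm_num)
  have h3 : j + (n - i % 2) + i % 2 = j + n := by omega
  rw [h3, Nat.add_mod_right, Nat.mod_eq_of_lt hj]

lemma mod_succ_ne {n x : ℕ} (hn : 2 ≤ n) : x % n ≠ (x + 1) % n := by
  intro h
  have h2 : n ∣ (x + 1) - x := (Nat.modEq_iff_dvd' (Nat.le_succ x)).mp h
  simp at h2
  omega

lemma consec {m n : ℕ} (hm : 2 ≤ m) (hn : 2 ≤ n) (k : ℕ) (hk : k % 2 = 0)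
    (hk1 : k + 1 < m * n) :
    jrow m k ≠ jrow m (k + 1) ∧ jcol m n k ≠ jcol m n (k + 1) := by
  have hm0 : 0 < m := by omega
  have hqr := Nat.div_add_mod k m   -- m * (k/m) + k%m = k
  set r := k % m with hr
  set q := k / m with hq
  have hrlt : r < m := Nat.mod_lt _ hm0
  by_cases hcase : r + 1 < m
  · have h1 : k + 1 = m * q + (r + 1) := by omega
    have hrow : (k+1) % m = r + 1 := by
      rw [h1, Nat.mul_add_mod, Nat.mod_eq_of_lt hcase]
    have hdiv : (k+1) / m = q := by
      rw [h1, Nat.mul_add_div hm0, Nat.div_eq_of_lt hcase, Nat.add_zero]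
    constructor
    · unfold jrow; omega
    · unfold jcol
      rw [hrow, hdiv, ← hr, ← hq]
      rcases Nat.even_or_odd r with he | ho
      · have h2 : r % 2 = 0 := Nat.even_iff.mp he
        have h3 : (r+1) % 2 = 1 := by omega
        rw [h2, h3]
        simpa using mod_succ_ne (x := q) hn
      · have h2 : r % 2 = 1 := Nat.odd_iff.mp ho
        have h3 : (r+1) % 2 = 0 := by omega
        rw [h2, h3]
        simpa using (mod_succ_ne (x := q) hn).symm
  · have hrm : r = m - 1 := by omega
    have h1 : k + 1 = m * (q + 1) := by rw [Nat.mul_add, Nat.mul_one]; omega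
    have hrow : (k+1) % m = 0 := by rw [h1]; simp [Nat.mul_mod_right]
    have hdiv : (k+1) / m = q + 1 := by rw [h1]; exact Nat.mul_div_cancel_left _ hm0
    rcases Nat.even_or_odd m with he | ho
    · exfalso
      obtain ⟨c, hc⟩ := he
      have : k + 1 = 2 * (c * (q+1)) := by rw [h1]; rw [hc]; ring
      omega
    · have hmo : m % 2 = 1 := Nat.odd_iff.mp ho
      have hr2 : r % 2 = 0 := by omega
      constructor
      · unfold jrow; omega
      · unfold jcol
        rw [hrow, hdiv, ← hr, ← hq, hr2]
        simpa using mod_succ_ne (x := q) hn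

lemma jrow_lt {m : ℕ} (hm : 0 < m) (k : ℕ) : jrow m k < m := Nat.mod_lt _ hm
lemma jcol_lt {m n : ℕ} (hn : 0 < n) (k : ℕ) : jcol m n k < n := Nat.mod_lt _ hn

lemma cross_key {m n : ℕ} (hm : 2 ≤ m) (hn : 2 ≤ n) {i j i' j' : ℕ}
    (hi : i < m) (hj : j < n) (hi' : i' < m) (hj' : j' < n)
    (h : jidx m n i j / 2 = jidx m n i' j' / 2) :
    (i = i' ∧ j = j') ∨ (i ≠ i' ∧ j ≠ j') := by
  set k := jidx m n i j with hk
  set k' := jidx m n i' j' with hk'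
  by_cases hkk : k = k'
  · left
    constructor
    · rw [← jrow_jidx (n := n) (j := j) hi, ← jrow_jidx (n := n) (j := j') hi', ← hk, ← hk', hkk]
    · rw [← jcol_jidx hi hj, ← jcol_jidx hi' hj', ← hk, ← hk', hkk]
  · right
    have hlt : k < m * n := jidx_lt hi (by omega)
    have hlt' : k' < m * n := jidx_lt hi' (by omega)
    rcases Nat.lt_or_ge k k' with hc | hc
    · have h1 : k' = k + 1 := by omega
      have h2 : k % 2 = 0 := by omega
      have h3 := consec hm hn k h2 (by omega)
      constructor
      · rw [← jrow_jidx (n := n) (j := j) hi, ← jrow_jidx (n := n) (j := j') hi', ← hk, ← hk', h1]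
        exact h3.1
      · rw [← jcol_jidx hi hj, ← jcol_jidx hi' hj', ← hk, ← hk', h1]
        exact h3.2
    · have h1 : k = k' + 1 := by omega
      have h2 : k' % 2 = 0 := by omega
      have h3 := consec hm hn k' h2 (by omega)
      constructor
      · rw [← jrow_jidx (n := n) (j := j) hi, ← jrow_jidx (n := n) (j := j') hi', ← hk, ← hk', h1]
        exact h3.1.symm
      · rw [← jcol_jidx hi hj, ← jcol_jidx hi' hj', ← hk, ← hk', h1]
        exact h3.2.symm

lemma cross_class {m n : ℕ} {i j t : ℕ} (hi : i < m) (hj : j < n)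
    (h : jidx m n i j / 2 = t) :
    (i = jrow m (2 * t) ∧ j = jcol m n (2 * t)) ∨
    (i = jrow m (2 * t + 1) ∧ j = jcol m n (2 * t + 1)) := by
  have h2 : jidx m n i j = 2 * t ∨ jidx m n i j = 2 * t + 1 := by omega
  rcases h2 with h2 | h2
  · left; rw [← h2, jrow_jidx hi, jcol_jidx hi hj]; exact ⟨rfl, rfl⟩
  · right; rw [← h2, jrow_jidx hi, jcol_jidx hi hj]; exact ⟨rfl, rfl⟩

section Coloring
variable {α β : Type*} (G : SimpleGraph α) (H : SimpleGraph β) {a b m n : ℕ}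
  (cG : G.edgeSet → Fin a) (cH : H.edgeSet → Fin b) (eα : α ≃ Fin m) (eβ : β ≃ Fin n)

noncomputable def cgv (u v : α) : ℕ :=
  letI := Classical.dec (G.Adj u v)
  if h : G.Adj u v then (cG ⟨s(u, v), h⟩ : ℕ) else 0

noncomputable def chv (u v : β) : ℕ :=
  letI := Classical.dec (H.Adj u v)
  if h : H.Adj u v then (cH ⟨s(u, v), h⟩ : ℕ) else 0

def crossv (a b m n : ℕ) (eα : α ≃ Fin m) (eβ : β ≃ Fin n) (u : α) (v : β) : ℕ :=
  a + b + jidx m n (eα u) (eβ v) / 2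

lemma cgv_adj {u v : α} (h : G.Adj u v) : cgv G cG u v = (cG ⟨s(u, v), h⟩ : ℕ) := by
  unfold cgv
  split
  · rfl
  · exact absurd h (by assumption)

lemma chv_adj {u v : β} (h : H.Adj u v) : chv H cH u v = (cH ⟨s(u, v), h⟩ : ℕ) := by
  unfold chv
  split
  · rfl
  · exact absurd h (by assumption)

lemma cgv_symm (u v : α) : cgv G cG u v = cgv G cG v u := by
  by_cases h : G.Adj u v
  · rw [cgv_adj G cG h, cgv_adj G cG h.symm]
    have hsub : (⟨s(u, v), h⟩ : G.edgeSet) = ⟨s(v, u), h.symm⟩ := Subtype.ext Sym2.eq_swap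
    rw [hsub]
  · unfold cgv
    rw [dif_neg h, dif_neg (fun h' => h h'.symm)]

lemma chv_symm (u v : β) : chv H cH u v = chv H cH v u := by
  by_cases h : H.Adj u v
  · rw [chv_adj H cH h, chv_adj H cH h.symm]
    have hsub : (⟨s(u, v), h⟩ : H.edgeSet) = ⟨s(v, u), h.symm⟩ := Subtype.ext Sym2.eq_swap
    rw [hsub]
  · unfold chv
    rw [dif_neg h, dif_neg (fun h' => h h'.symm)]

noncomputable def joinColorFun : α ⊕ β → α ⊕ β → ℕ
  | .inl u, .inl v => cgv G cG u v
  | .inl u, .inr v => crossv a b m n eα eβ u v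
  | .inr u, .inl v => crossv a b m n eα eβ v u
  | .inr u, .inr v => a + chv H cH u v

noncomputable def joinColor : Sym2 (α ⊕ β) → ℕ :=
  Sym2.lift ⟨joinColorFun G H cG cH eα eβ, by
    rintro (u | u) (v | v)
    · exact cgv_symm G cG u v
    · rfl
    · rfl
    · exact congrArg (a + ·) (chv_symm H cH u v)⟩

@[simp] lemma joinColor_ll (u v : α) :
    joinColor G H cG cH eα eβ s(.inl u, .inl v) = cgv G cG u v := rfl

@[simp] lemma joinColor_rr (u v : β) :
    joinColor G H cG cH eα eβ s(.inr u, .inr v) = a + chv H cH u v := rfl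

@[simp] lemma joinColor_lr (u : α) (v : β) :
    joinColor G H cG cH eα eβ s(.inl u, .inr v) = crossv a b m n eα eβ u v := rfl

end Coloring

lemma join_coloring {α β : Type*} (G : SimpleGraph α) (H : SimpleGraph β)
    {a b m n : ℕ} (cG : G.edgeSet → Fin a) (cH : H.edgeSet → Fin b)
    (eα : α ≃ Fin m) (eβ : β ≃ Fin n)
    (hcG : IsDomEdgeColoring G cG) (hcH : IsDomEdgeColoring H cH)
    (hm : 2 ≤ m) (hn : 2 ≤ n) :
    ∃ c : (graphJoin G H).edgeSet →
        Fin (a + b + (m * n + 1) / 2),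
      IsDomEdgeColoring (graphJoin G H) c := by
  classical
  have hm0 : 0 < m := by omega
  have hn0 : 0 < n := by omega
  have hbound : ∀ e : (graphJoin G H).edgeSet,
      joinColor G H cG cH eα eβ (e : Sym2 (α ⊕ β)) < a + b + (m * n + 1) / 2 := by
    intro e
    rcases join_edge_cases G H e with ⟨u, v, hadj, he⟩ | ⟨u, v, hadj, he⟩ | ⟨u, v, he⟩
    · rw [he, joinColor_ll, cgv_adj G cG hadj]
      have := (cG ⟨s(u, v), hadj⟩).isLt
      omega
    · rw [he, joinColor_rr, chv_adj H cH hadj]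
      have := (cH ⟨s(u, v), hadj⟩).isLt
      omega
    · rw [he, joinColor_lr]
      unfold crossv
      have h1 : jidx m n (eα u) (eβ v) < m * n := jidx_lt (eα u).isLt hn0
      omega
  refine ⟨fun e => ⟨joinColor G H cG cH eα eβ (e : Sym2 (α ⊕ β)), hbound e⟩, ?_, ?_⟩
  · -- properness
    rintro e f ⟨hne, w, hwe, hwf⟩ hcc
    have hval : joinColor G H cG cH eα eβ (e : Sym2 (α ⊕ β)) =
        joinColor G H cG cH eα eβ (f : Sym2 (α ⊕ β)) := congrArg Fin.val hcc
    rcases join_edge_cases G H e with ⟨u1, v1, ha1, he⟩ | ⟨u1, v1, ha1, he⟩ | ⟨u1, v1, he⟩ <;>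
      rcases join_edge_cases G H f with ⟨u2, v2, ha2, hf⟩ | ⟨u2, v2, ha2, hf⟩ | ⟨u2, v2, hf⟩
    · -- G G
      rw [he, hf] at hval
      simp only [joinColor_ll] at hval
      rw [cgv_adj G cG ha1, cgv_adj G cG ha2] at hval
      have hGne : (⟨s(u1, v1), ha1⟩ : G.edgeSet) ≠ ⟨s(u2, v2), ha2⟩ := by
        intro hq
        apply hne
        apply Subtype.ext
        rw [he, hf]
        have h1 : s(u1, v1) = s(u2, v2) := congrArg Subtype.val hq
        have h2 := congrArg (Sym2.map (Sum.inl : α → α ⊕ β)) h1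
        simpa [Sym2.map_pair_eq] using h2
      rw [he, Sym2.mem_iff] at hwe
      rw [hf, Sym2.mem_iff] at hwf
      have hsh : ∃ x : α, x ∈ s(u1, v1) ∧ x ∈ s(u2, v2) := by
        rcases hwe with h1 | h1 <;> rcases hwf with h2 | h2 <;> rw [h1] at h2
        · exact ⟨u1, by simp, by rw [Sum.inl.inj h2]; simp⟩
        · exact ⟨u1, by simp, by rw [Sum.inl.inj h2]; simp⟩
        · exact ⟨v1, by simp, by rw [Sum.inl.inj h2]; simp⟩
        · exact ⟨v1, by simp, by rw [Sum.inl.inj h2]; simp⟩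
      exact hcG.1 _ _ ⟨hGne, hsh⟩ (Fin.val_injective hval)
    · -- G H
      rw [he, hf] at hval
      simp only [joinColor_ll, joinColor_rr] at hval
      rw [cgv_adj G cG ha1] at hval
      have := (cG ⟨s(u1, v1), ha1⟩).isLt
      omega
    · -- G cross
      rw [he, hf] at hval
      simp only [joinColor_ll, joinColor_lr] at hval
      unfold crossv at hval
      rw [cgv_adj G cG ha1] at hval
      have := (cG ⟨s(u1, v1), ha1⟩).isLt
      omega
    · -- H G
      rw [he, hf] at hval
      simp only [joinColor_ll, joinColor_rr] at hval
      rw [cgv_adj G cG ha2] at hval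
      have := (cG ⟨s(u2, v2), ha2⟩).isLt
      omega
    · -- H H
      rw [he, hf] at hval
      simp only [joinColor_rr] at hval
      rw [chv_adj H cH ha1, chv_adj H cH ha2] at hval
      have hHne : (⟨s(u1, v1), ha1⟩ : H.edgeSet) ≠ ⟨s(u2, v2), ha2⟩ := by
        intro hq
        apply hne
        apply Subtype.ext
        rw [he, hf]
        have h1 : s(u1, v1) = s(u2, v2) := congrArg Subtype.val hq
        have h2 := congrArg (Sym2.map (Sum.inr : β → α ⊕ β)) h1
        simpa [Sym2.map_pair_eq] using h2
      rw [he, Sym2.mem_iff] at hwe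
      rw [hf, Sym2.mem_iff] at hwf
      have hsh : ∃ x : β, x ∈ s(u1, v1) ∧ x ∈ s(u2, v2) := by
        rcases hwe with h1 | h1 <;> rcases hwf with h2 | h2 <;> rw [h1] at h2
        · exact ⟨u1, by simp, by rw [Sum.inr.inj h2]; simp⟩
        · exact ⟨u1, by simp, by rw [Sum.inr.inj h2]; simp⟩
        · exact ⟨v1, by simp, by rw [Sum.inr.inj h2]; simp⟩
        · exact ⟨v1, by simp, by rw [Sum.inr.inj h2]; simp⟩
      have hv2 : (cH ⟨s(u1, v1), ha1⟩ : ℕ) = (cH ⟨s(u2, v2), ha2⟩ : ℕ) := by omega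
      exact hcH.1 _ _ ⟨hHne, hsh⟩ (Fin.val_injective hv2)
    · -- H cross
      rw [he, hf] at hval
      simp only [joinColor_rr, joinColor_lr] at hval
      unfold crossv at hval
      rw [chv_adj H cH ha1] at hval
      have := (cH ⟨s(u1, v1), ha1⟩).isLt
      omega
    · -- cross G
      rw [he, hf] at hval
      simp only [joinColor_ll, joinColor_lr] at hval
      unfold crossv at hval
      rw [cgv_adj G cG ha2] at hval
      have := (cG ⟨s(u2, v2), ha2⟩).isLt
      omega
    · -- cross H
      rw [he, hf] at hval
      simp only [joinColor_rr, joinColor_lr] at hval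
      unfold crossv at hval
      rw [chv_adj H cH ha2] at hval
      have := (cH ⟨s(u2, v2), ha2⟩).isLt
      omega
    · -- cross cross
      rw [he, hf] at hval
      simp only [joinColor_lr] at hval
      unfold crossv at hval
      have ht : jidx m n (eα u1) (eβ v1) / 2 = jidx m n (eα u2) (eβ v2) / 2 := by omega
      have hk := cross_key hm hn (eα u1).isLt (eβ v1).isLt (eα u2).isLt (eβ v2).isLt ht
      rw [he, Sym2.mem_iff] at hwe
      rw [hf, Sym2.mem_iff] at hwf
      have huv : u1 = u2 ∨ v1 = v2 := by
        rcases hwe with h1 | h1 <;> rcases hwf with h2 | h2 <;> rw [h1] at h2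
        · exact Or.inl (Sum.inl.inj h2)
        · exact absurd h2 (by simp)
        · exact absurd h2 (by simp)
        · exact Or.inr (Sum.inr.inj h2)
      rcases hk with ⟨hie, hje⟩ | ⟨hine, hjne⟩
      · apply hne
        apply Subtype.ext
        rw [he, hf]
        have hu : u1 = u2 := eα.injective (Fin.val_injective hie)
        have hv : v1 = v2 := eβ.injective (Fin.val_injective hje)
        rw [hu, hv]
      · rcases huv with h | h
        · exact hine (by rw [h])
        · exact hjne (by rw [h])
  · -- domination
    intro i
    by_cases hia : (i : ℕ) < a
    · obtain ⟨eg, heg⟩ := hcG.2 ⟨i, hia⟩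
      obtain ⟨u, v, hadj, huv⟩ := edge_repr eg
      refine ⟨⟨s(.inl u, .inl v),
        (SimpleGraph.mem_edgeSet _).mpr ((joinAdj_ll G H).mpr hadj)⟩, ?_⟩
      intro f hf
      have hval : joinColor G H cG cH eα eβ (f : Sym2 (α ⊕ β)) = (i : ℕ) :=
        congrArg Fin.val hf
      rcases join_edge_cases G H f with ⟨u2, v2, ha2, hf2⟩ | ⟨u2, v2, ha2, hf2⟩ | ⟨u2, v2, hf2⟩
      · rw [hf2] at hval
        simp only [joinColor_ll] at hval
        rw [cgv_adj G cG ha2] at hval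
        have hcf : cG ⟨s(u2, v2), ha2⟩ = ⟨i, hia⟩ := Fin.val_injective hval
        rcases heg _ hcf with hEq | hAdj
        · left
          apply Subtype.ext
          rw [hf2]
          have h1 : s(u2, v2) = (eg : Sym2 α) := congrArg Subtype.val hEq
          rw [huv] at h1
          have h2 := congrArg (Sym2.map (Sum.inl : α → α ⊕ β)) h1
          simpa [Sym2.map_pair_eq] using h2
        · right
          obtain ⟨hne', x, hx1, hx2⟩ := hAdj
          refine ⟨?_, Sum.inl x, ?_, ?_⟩
          · intro hq
            apply hne'
            have h1 : s((Sum.inl u : α ⊕ β), Sum.inl v) = s((Sum.inl u2 : α ⊕ β), Sum.inl v2) := by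
              rw [← hf2]
              exact congrArg Subtype.val hq
            have h2 : Sym2.map (Sum.inl : α → α ⊕ β) s(u, v) = Sym2.map (Sum.inl : α → α ⊕ β) s(u2, v2) := by
              simpa [Sym2.map_pair_eq] using h1
            have h3 := Sym2.map.injective Sum.inl_injective h2
            apply Subtype.ext
            rw [huv, h3]
          · rw [huv, Sym2.mem_iff] at hx1
            rcases hx1 with h | h <;> rw [h] <;> simp
          · rw [hf2]
            rw [Sym2.mem_iff] at hx2 ⊢
            rcases hx2 with h | h <;> rw [h] <;> simp
      · rw [hf2] at hval
        simp only [joinColor_rr] at hval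
        omega
      · rw [hf2] at hval
        simp only [joinColor_lr] at hval
        unfold crossv at hval
        omega
    · by_cases hib : (i : ℕ) < a + b
      · have hib' : (i : ℕ) - a < b := by omega
        obtain ⟨eh, heh⟩ := hcH.2 ⟨(i : ℕ) - a, hib'⟩
        obtain ⟨u, v, hadj, huv⟩ := edge_repr eh
        refine ⟨⟨s(.inr u, .inr v),
          (SimpleGraph.mem_edgeSet _).mpr ((joinAdj_rr G H).mpr hadj)⟩, ?_⟩
        intro f hf
        have hval : joinColor G H cG cH eα eβ (f : Sym2 (α ⊕ β)) = (i : ℕ) :=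
          congrArg Fin.val hf
        rcases join_edge_cases G H f with ⟨u2, v2, ha2, hf2⟩ | ⟨u2, v2, ha2, hf2⟩ | ⟨u2, v2, hf2⟩
        · rw [hf2] at hval
          simp only [joinColor_ll] at hval
          rw [cgv_adj G cG ha2] at hval
          have := (cG ⟨s(u2, v2), ha2⟩).isLt
          omega
        · rw [hf2] at hval
          simp only [joinColor_rr] at hval
          rw [chv_adj H cH ha2] at hval
          have hcf : cH ⟨s(u2, v2), ha2⟩ = ⟨(i : ℕ) - a, hib'⟩ :=
            Fin.val_injective
              (show ((cH ⟨s(u2, v2), ha2⟩ : Fin b) : ℕ) = (i : ℕ) - a by omega)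
          rcases heh _ hcf with hEq | hAdj
          · left
            apply Subtype.ext
            rw [hf2]
            have h1 : s(u2, v2) = (eh : Sym2 β) := congrArg Subtype.val hEq
            rw [huv] at h1
            have h2 := congrArg (Sym2.map (Sum.inr : β → α ⊕ β)) h1
            simpa [Sym2.map_pair_eq] using h2
          · right
            obtain ⟨hne', x, hx1, hx2⟩ := hAdj
            refine ⟨?_, Sum.inr x, ?_, ?_⟩
            · intro hq
              apply hne'
              have h1 : s((Sum.inr u : α ⊕ β), Sum.inr v) = s((Sum.inr u2 : α ⊕ β), Sum.inr v2) := by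
                rw [← hf2]
                exact congrArg Subtype.val hq
              have h2 : Sym2.map (Sum.inr : β → α ⊕ β) s(u, v) = Sym2.map (Sum.inr : β → α ⊕ β) s(u2, v2) := by
                simpa [Sym2.map_pair_eq] using h1
              have h3 := Sym2.map.injective Sum.inr_injective h2
              apply Subtype.ext
              rw [huv, h3]
            · rw [huv, Sym2.mem_iff] at hx1
              rcases hx1 with h | h <;> rw [h] <;> simp
            · rw [hf2]
              rw [Sym2.mem_iff] at hx2 ⊢
              rcases hx2 with h | h <;> rw [h] <;> simp
        · rw [hf2] at hval
          simp only [joinColor_lr] at hval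
          unfold crossv at hval
          omega
      · -- cross colors
        have hiN := i.isLt
        set t := (i : ℕ) - (a + b) with htdef
        have h2t : 2 * t < m * n := by omega
        by_cases hpair : 2 * t + 1 < m * n
        · refine ⟨⟨s(.inl (eα.symm ⟨jrow m (2 * t), jrow_lt hm0 _⟩),
              .inr (eβ.symm ⟨jcol m n (2 * t + 1), jcol_lt hn0 _⟩)),
            (SimpleGraph.mem_edgeSet _).mpr (joinAdj_lr G H _ _)⟩, ?_⟩
          intro f hf
          have hval : joinColor G H cG cH eα eβ (f : Sym2 (α ⊕ β)) = (i : ℕ) :=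
            congrArg Fin.val hf
          rcases join_edge_cases G H f with ⟨u2, v2, ha2, hf2⟩ | ⟨u2, v2, ha2, hf2⟩ | ⟨u2, v2, hf2⟩
          · rw [hf2] at hval
            simp only [joinColor_ll] at hval
            rw [cgv_adj G cG ha2] at hval
            have := (cG ⟨s(u2, v2), ha2⟩).isLt
            omega
          · rw [hf2] at hval
            simp only [joinColor_rr] at hval
            rw [chv_adj H cH ha2] at hval
            have := (cH ⟨s(u2, v2), ha2⟩).isLt
            omega
          · rw [hf2] at hval
            simp only [joinColor_lr] at hval
            unfold crossv at hval
            have ht : jidx m n (eα u2) (eβ v2) / 2 = t := by omega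
            have hcl := cross_class (eα u2).isLt (eβ v2).isLt ht
            have hcons := consec hm hn (2 * t) (by omega) (by omega)
            right
            rcases hcl with ⟨hr, hc⟩ | ⟨hr, hc⟩
            · -- f = g(2t): share the inl vertex
              have hu : eα.symm ⟨jrow m (2 * t), jrow_lt hm0 _⟩ = u2 := by
                have h1 : eα u2 = ⟨jrow m (2 * t), jrow_lt hm0 _⟩ := Fin.val_injective hr
                rw [← h1, Equiv.symm_apply_apply]
              refine ⟨?_, Sum.inl u2, ?_, ?_⟩
              · intro hq
                have h1 : s(Sum.inl (eα.symm ⟨jrow m (2 * t), jrow_lt hm0 _⟩),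
                    Sum.inr (eβ.symm ⟨jcol m n (2 * t + 1), jcol_lt hn0 _⟩)) =
                    s(Sum.inl u2, Sum.inr v2) := by
                  rw [← hf2]
                  exact congrArg Subtype.val hq
                rcases Sym2.eq_iff.mp h1 with ⟨hA, hB⟩ | ⟨hA, hB⟩
                · have h2 : eβ.symm ⟨jcol m n (2 * t + 1), jcol_lt hn0 _⟩ = v2 :=
                    Sum.inr.inj hB
                  have h3 : (⟨jcol m n (2 * t + 1), jcol_lt hn0 _⟩ : Fin n) = eβ v2 := by
                    rw [← h2, Equiv.apply_symm_apply]
                  have h4 : jcol m n (2 * t + 1) = jcol m n (2 * t) := by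
                    have := congrArg Fin.val h3
                    simpa [hc] using this
                  exact hcons.2 h4.symm
                · exact absurd hA (by simp)
              · rw [hu]
                simp
              · rw [hf2]
                simp
            · -- f = g(2t+1): share the inr vertex
              have hv : eβ.symm ⟨jcol m n (2 * t + 1), jcol_lt hn0 _⟩ = v2 := by
                have h1 : eβ v2 = ⟨jcol m n (2 * t + 1), jcol_lt hn0 _⟩ := Fin.val_injective hc
                rw [← h1, Equiv.symm_apply_apply]
              refine ⟨?_, Sum.inr v2, ?_, ?_⟩
              · intro hq
                have h1 : s(Sum.inl (eα.symm ⟨jrow m (2 * t), jrow_lt hm0 _⟩),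
                    Sum.inr (eβ.symm ⟨jcol m n (2 * t + 1), jcol_lt hn0 _⟩)) =
                    s(Sum.inl u2, Sum.inr v2) := by
                  rw [← hf2]
                  exact congrArg Subtype.val hq
                rcases Sym2.eq_iff.mp h1 with ⟨hA, hB⟩ | ⟨hA, hB⟩
                · have h2 : eα.symm ⟨jrow m (2 * t), jrow_lt hm0 _⟩ = u2 := Sum.inl.inj hA
                  have h3 : (⟨jrow m (2 * t), jrow_lt hm0 _⟩ : Fin m) = eα u2 := by
                    rw [← h2, Equiv.apply_symm_apply]
                  have h4 : jrow m (2 * t) = jrow m (2 * t + 1) := by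
                    have := congrArg Fin.val h3
                    simpa [hr] using this
                  exact hcons.1 h4
                · exact absurd hA (by simp)
              · rw [hv]
                simp
              · rw [hf2]
                simp
        · -- singleton class
          refine ⟨⟨s(.inl (eα.symm ⟨jrow m (2 * t), jrow_lt hm0 _⟩),
              .inr (eβ.symm ⟨jcol m n (2 * t), jcol_lt hn0 _⟩)),
            (SimpleGraph.mem_edgeSet _).mpr (joinAdj_lr G H _ _)⟩, ?_⟩
          intro f hf
          have hval : joinColor G H cG cH eα eβ (f : Sym2 (α ⊕ β)) = (i : ℕ) :=
            congrArg Fin.val hf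
          rcases join_edge_cases G H f with ⟨u2, v2, ha2, hf2⟩ | ⟨u2, v2, ha2, hf2⟩ | ⟨u2, v2, hf2⟩
          · rw [hf2] at hval
            simp only [joinColor_ll] at hval
            rw [cgv_adj G cG ha2] at hval
            have := (cG ⟨s(u2, v2), ha2⟩).isLt
            omega
          · rw [hf2] at hval
            simp only [joinColor_rr] at hval
            rw [chv_adj H cH ha2] at hval
            have := (cH ⟨s(u2, v2), ha2⟩).isLt
            omega
          · rw [hf2] at hval
            simp only [joinColor_lr] at hval
            unfold crossv at hval
            have hlt : jidx m n (eα u2) (eβ v2) < m * n := jidx_lt (eα u2).isLt hn0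
            have heq : jidx m n (eα u2) (eβ v2) = 2 * t := by omega
            have hr : (eα u2 : ℕ) = jrow m (2 * t) := by
              rw [← heq, jrow_jidx (eα u2).isLt]
            have hc : (eβ v2 : ℕ) = jcol m n (2 * t) := by
              rw [← heq, jcol_jidx (eα u2).isLt (eβ v2).isLt]
            left
            apply Subtype.ext
            rw [hf2]
            have hu : u2 = eα.symm ⟨jrow m (2 * t), jrow_lt hm0 _⟩ := by
              have h1 : eα u2 = ⟨jrow m (2 * t), jrow_lt hm0 _⟩ := Fin.val_injective hr
              rw [← h1, Equiv.symm_apply_apply]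
            have hv : v2 = eβ.symm ⟨jcol m n (2 * t), jcol_lt hn0 _⟩ := by
              have h1 : eβ v2 = ⟨jcol m n (2 * t), jcol_lt hn0 _⟩ := Fin.val_injective hc
              rw [← h1, Equiv.symm_apply_apply]
            rw [hu, hv]

lemma card_ge_two_of_edge {V : Type*} [Fintype V] (G : SimpleGraph V)
    (he : G.edgeSet.Nonempty) : 2 ≤ Fintype.card V := by
  obtain ⟨e, heE⟩ := he
  induction e using Sym2.ind with
  | _ x y =>
    have hadj : G.Adj x y := (SimpleGraph.mem_edgeSet _).mp heE
    have : Nontrivial V := ⟨x, y, hadj.ne⟩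
    exact Fintype.one_lt_card


/-- For connected graphs `G`, `H` each with at least one edge,
`χ'_dom(G + H) ≤ χ'_dom(G) + χ'_dom(H) + ⌈|V(G)|·|V(H)|/2⌉`. -/
theorem stmt_11 {α β : Type*} [Fintype α] [Fintype β]
    (G : SimpleGraph α) (H : SimpleGraph β)
    (hG : G.Connected) (hH : H.Connected)
    (heG : G.edgeSet.Nonempty) (heH : H.edgeSet.Nonempty) :
    domEdgeChrom (graphJoin G H) ≤
      domEdgeChrom G + domEdgeChrom H + (Fintype.card α * Fintype.card β + 1) / 2 := by
  obtain ⟨cG, hcG⟩ := exists_optimal G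
  obtain ⟨cH, hcH⟩ := exists_optimal H
  have hm : 2 ≤ Fintype.card α := card_ge_two_of_edge G heG
  have hn : 2 ≤ Fintype.card β := card_ge_two_of_edge H heH
  obtain ⟨c, hc⟩ := join_coloring G H cG cH (Fintype.equivFin α) (Fintype.equivFin β)
    hcG hcH hm hn
  exact Nat.sInf_le ⟨c, hc⟩
end

section
/- If G is a connected finite simple graph with m edges and k is a natural number with k ≥ 4 and k ≡ 0 (mod 4), then χ'_dom(G^{1/k}) = m · χ'_dom(P_{k+1}). -/
set_option maxHeartbeats 1000000


open SimpleGraph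

/-- The `k`-subdivision `G^{1/k}` of `G`: every edge of `G` is replaced by a path of length
`k`. Internal vertices of the superedge replacing an edge `e` are pairs `(e, l)` with
`l < k - 1`, indexed by their distance (minus one) from the smaller endpoint of `e`. -/
def subdivision {V : Type*} [LinearOrder V] (G : SimpleGraph V) (k : ℕ) :
    SimpleGraph (V ⊕ G.edgeSet × Fin (k - 1)) :=
  SimpleGraph.fromRel (fun a b =>
    match a, b with
    | .inl u, .inl w => k = 1 ∧ G.Adj u w
    | .inl u, .inr (e, l) =>
        ((l : ℕ) = 0 ∧ u = Sym2.inf (e : Sym2 V)) ∨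
        ((l : ℕ) = k - 2 ∧ u = Sym2.sup (e : Sym2 V))
    | .inr _, .inl _ => False
    | .inr (e, l), .inr (e', l') => e = e' ∧ (l : ℕ) + 1 = (l' : ℕ))

section General
variable {V : Type*} {G : SimpleGraph V}

lemma edgeAdj_symm {e f : G.edgeSet} (h : EdgeAdj G e f) : EdgeAdj G f e :=
  ⟨h.1.symm, h.2.elim fun v hv => ⟨v, hv.2, hv.1⟩⟩

lemma domEdgeChrom_eq_of {t : ℕ}
    (h1 : ∃ c : G.edgeSet → Fin t, IsDomEdgeColoring G c)
    (h2 : ∀ n (c : G.edgeSet → Fin n), IsDomEdgeColoring G c → t ≤ n) :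
    domEdgeChrom G = t :=
  le_antisymm (Nat.sInf_le h1) (le_csInf ⟨t, h1⟩ fun n hn => hn.elim fun c hc => h2 n c hc)

lemma no_three {n : ℕ} {c : G.edgeSet → Fin n} (hc : IsDomEdgeColoring G c)
    {a b d : G.edgeSet} (hab : a ≠ b) (had : a ≠ d) (hbd : b ≠ d)
    (h1 : c a = c b) (h2 : c a = c d) : False := by
  have share : ∀ (u v : G.edgeSet), u ≠ v → c u = c v →
      ∀ w, w ∈ (u : Sym2 V) → w ∈ (v : Sym2 V) → False :=
    fun u v huv hcc w hwu hwv => hc.1 u v ⟨huv, w, hwu, hwv⟩ hcc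
  obtain ⟨e, he⟩ := hc.2 (c a)
  have ha := he a rfl
  have hb := he b h1.symm
  have hd := he d h2.symm
  -- none of a, b, d can equal e (otherwise immediate adjacency contradiction)
  rcases ha with rfl | ha
  · rcases hb with rfl | hb
    · exact hab rfl
    · exact hc.1 a b hb h1
  rcases hb with rfl | hb
  · exact hc.1 b a ha h1.symm
  rcases hd with rfl | hd
  · exact hc.1 d a ha h2.symm
  obtain ⟨⟨x, y⟩, hq⟩ := Quot.exists_rep (e : Sym2 V)
  have hxy : (e : Sym2 V) = s(x, y) := hq.symm
  obtain ⟨va, hvae, hva⟩ := ha.2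
  obtain ⟨vb, hvbe, hvb⟩ := hb.2
  obtain ⟨vd, hvde, hvd⟩ := hd.2
  rw [hxy, Sym2.mem_iff] at hvae hvbe hvde
  rcases hvae with rfl | rfl <;> rcases hvbe with h2' | h2' <;> rcases hvde with h3' | h3' <;>
    first
      | exact share a b hab h1 _ hva (h2' ▸ hvb)
      | exact share a d had h2 _ hva (h3' ▸ hvd)
      | exact share b d hbd (h1.symm.trans h2) _ (h2' ▸ hvb) (h3' ▸ hvd)

lemma card_le_of_dom [Finite ↥G.edgeSet] {n : ℕ} {c : G.edgeSet → Fin n}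
    (hc : IsDomEdgeColoring G c) : Nat.card ↥G.edgeSet ≤ 2 * n := by
  classical
  cases nonempty_fintype ↥G.edgeSet
  rw [Nat.card_eq_fintype_card, ← Finset.card_univ,
    Finset.card_eq_sum_card_fiberwise (t := (Finset.univ : Finset (Fin n)))
      (fun x _ => Finset.mem_univ (c x))]
  have hb : ∀ i : Fin n, (Finset.univ.filter (fun x => c x = i)).card ≤ 2 := by
    intro i
    by_contra hlt
    push_neg at hlt
    obtain ⟨a, ha, b, hb, d, hd, hab, had, hbd⟩ := Finset.two_lt_card.mp hlt
    simp only [Finset.mem_filter] at ha hb hd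
    exact no_three hc hab had hbd (ha.2.trans hb.2.symm) (ha.2.trans hd.2.symm)
  calc ∑ i : Fin n, (Finset.univ.filter (fun x => c x = i)).card
      ≤ ∑ _i : Fin n, 2 := Finset.sum_le_sum fun i _ => hb i
    _ = 2 * n := by simp [mul_comm]

lemma main_calc {E : Type*} [Finite E] {k m : ℕ}
    (hk : 4 ≤ k) (hk4 : k % 4 = 0)
    (ψ : E × Fin k ≃ ↥G.edgeSet) (hE : Nat.card E = m)
    (hAdj : ∀ (e : E) (p q : Fin k), (p : ℕ) + 1 = (q : ℕ) → EdgeAdj G (ψ (e, p)) (ψ (e, q)))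
    (hSep : ∀ (e : E) (p p' : Fin k), EdgeAdj G (ψ (e, p)) (ψ (e, p')) →
      (p : ℕ) + 1 = (p' : ℕ) ∨ (p' : ℕ) + 1 = (p : ℕ)) :
    domEdgeChrom G = m * (k / 2) := by
  have hfin : Finite ↥G.edgeSet := Finite.of_equiv _ ψ
  have hcard : Nat.card ↥G.edgeSet = m * k := by
    rw [← Nat.card_congr ψ, Nat.card_prod, hE, Nat.card_eq_fintype_card, Fintype.card_fin]
  let idx : E ≃ Fin m := Finite.equivFinOfCardEq hE
  have hpat : ∀ p : Fin k, 2 * ((p : ℕ) / 4) + (p : ℕ) % 2 < k / 2 := fun p => by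
    have := p.isLt; omega
  let patv : Fin k → Fin (k / 2) := fun p => ⟨2 * ((p : ℕ) / 4) + (p : ℕ) % 2, hpat p⟩
  let col : ↥G.edgeSet → Fin m × Fin (k / 2) := fun f => (idx (ψ.symm f).1, patv (ψ.symm f).2)
  let c : ↥G.edgeSet → Fin (m * (k / 2)) := fun f => finProdFinEquiv (col f)
  apply domEdgeChrom_eq_of
  · refine ⟨c, ?_, ?_⟩
    · intro f g hadj hcc
      have hcol : col f = col g := finProdFinEquiv.injective hcc
      have he : (ψ.symm f).1 = (ψ.symm g).1 := idx.injective (congrArg Prod.fst hcol)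
      have hp : patv (ψ.symm f).2 = patv (ψ.symm g).2 := congrArg Prod.snd hcol
      have hf : f = ψ ((ψ.symm f).1, (ψ.symm f).2) := by simp
      have hg : g = ψ ((ψ.symm f).1, (ψ.symm g).2) := by rw [he]; simp
      rw [hf, hg] at hadj
      have := hSep _ _ _ hadj
      have hv : 2 * (((ψ.symm f).2 : ℕ) / 4) + ((ψ.symm f).2 : ℕ) % 2
          = 2 * (((ψ.symm g).2 : ℕ) / 4) + ((ψ.symm g).2 : ℕ) % 2 :=
        congrArg Fin.val hp
      omega
    · intro i
      set a := (finProdFinEquiv.symm i).1 with haa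
      set j := (finProdFinEquiv.symm i).2 with hjj
      have hj := j.isLt
      set b : ℕ := 4 * ((j : ℕ) / 2) + (j : ℕ) % 2 with hbdef
      have hb2 : b + 2 < k := by omega
      refine ⟨ψ (idx.symm a, ⟨b + 1, by omega⟩), ?_⟩
      intro f hf
      right
      have hcol : col f = (a, j) := by
        have : finProdFinEquiv (col f) = i := hf
        rw [← this, Equiv.symm_apply_apply] at haa hjj
        exact Prod.ext haa.symm hjj.symm
      have he1 : (ψ.symm f).1 = idx.symm a := by
        have := congrArg Prod.fst hcol
        simp only [col] at this
        exact (Equiv.eq_symm_apply idx).mpr this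
      have hp1 : 2 * (((ψ.symm f).2 : ℕ) / 4) + ((ψ.symm f).2 : ℕ) % 2 = (j : ℕ) :=
        congrArg Fin.val (congrArg Prod.snd hcol)
      have hor : ((ψ.symm f).2 : ℕ) = b ∨ ((ψ.symm f).2 : ℕ) = b + 2 := by
        have := (ψ.symm f).2.isLt; omega
      have hfeq : f = ψ (idx.symm a, (ψ.symm f).2) := by rw [← he1]; simp
      rcases hor with h | h
      · have h2 : (ψ.symm f).2 = (⟨b, by omega⟩ : Fin k) := Fin.ext h
        rw [hfeq, h2]
        exact edgeAdj_symm (hAdj _ ⟨b, by omega⟩ ⟨b + 1, by omega⟩ rfl)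
      · have h2 : (ψ.symm f).2 = (⟨b + 2, by omega⟩ : Fin k) := Fin.ext h
        rw [hfeq, h2]
        exact hAdj _ ⟨b + 1, by omega⟩ ⟨b + 2, by omega⟩ rfl
  · intro n c' hc'
    have hle := card_le_of_dom hc'
    rw [hcard] at hle
    have hk2 : k = 2 * (k / 2) := by omega
    have : 2 * (m * (k / 2)) ≤ 2 * n := by
      calc 2 * (m * (k / 2)) = m * (2 * (k / 2)) := by ring
        _ = m * k := by rw [← hk2]
        _ ≤ 2 * n := hle
    omega

end General

section Subdiv
variable {V : Type*} [LinearOrder V] {G : SimpleGraph V} {k : ℕ}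

lemma inf_ne_sup {z : Sym2 V} (h : ¬ z.IsDiag) : Sym2.inf z ≠ Sym2.sup z := by
  induction z using Sym2.ind with
  | _ a b =>
    simp only [Sym2.inf_mk, Sym2.sup_mk, Sym2.mk_isDiag_iff] at *
    exact fun he => h (inf_eq_sup.mp he)

/-- the `i`-th vertex along the superedge replacing `e`. -/
def vtx (G : SimpleGraph V) (k : ℕ) (e : G.edgeSet) (i : ℕ) (hik : i ≤ k) (hk : 4 ≤ k) :
    V ⊕ G.edgeSet × Fin (k - 1) :=
  if _ : i = 0 then Sum.inl (Sym2.inf (e : Sym2 V))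
  else if _ : i = k then Sum.inl (Sym2.sup (e : Sym2 V))
  else Sum.inr (e, ⟨i - 1, by omega⟩)

lemma vtx_zero {e : G.edgeSet} {i : ℕ} (hi0 : i = 0) (h : i ≤ k) (hk : 4 ≤ k) :
    vtx G k e i h hk = Sum.inl (Sym2.inf (e : Sym2 V)) := by
  rw [vtx, dif_pos hi0]

lemma vtx_last {e : G.edgeSet} {i : ℕ} (hik : i = k) (h : i ≤ k) (hk : 4 ≤ k) :
    vtx G k e i h hk = Sum.inl (Sym2.sup (e : Sym2 V)) := by
  rw [vtx, dif_neg (by omega), dif_pos hik]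

lemma vtx_mid {e : G.edgeSet} {i : ℕ} (h0 : i ≠ 0) (hik : i ≠ k) (h : i ≤ k) (hk : 4 ≤ k) :
    vtx G k e i h hk = Sum.inr (e, ⟨i - 1, by omega⟩) := by
  rw [vtx, dif_neg h0, dif_neg hik]

lemma vtx_internal {e e' : G.edgeSet} {i i' : ℕ} {hi : i ≤ k} {hi' : i' ≤ k} {hk : 4 ≤ k}
    (h0 : 0 < i) (hik : i < k)
    (h : vtx G k e i hi hk = vtx G k e' i' hi' hk) : e = e' ∧ i = i' := by
  rw [vtx_mid (by omega) (by omega)] at h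
  unfold vtx at h
  split_ifs at h <;>
    first
      | exact Sum.noConfusion h
      | · simp only [Sum.inr.injEq, Prod.mk.injEq, Fin.mk.injEq] at h
          exact ⟨h.1, by omega⟩

lemma vtx_inj {e : G.edgeSet} {i i' : ℕ} {hi : i ≤ k} {hi' : i' ≤ k} {hk : 4 ≤ k}
    (h : vtx G k e i hi hk = vtx G k e i' hi' hk) : i = i' := by
  have hd : ¬ (e : Sym2 V).IsDiag := G.not_isDiag_of_mem_edgeSet e.2
  have hins := inf_ne_sup hd
  unfold vtx at h
  split_ifs at h <;>
    first
      | exact Sum.noConfusion h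
      | omega
      | · simp only [Sum.inl.injEq] at h
          first
            | exact absurd h hins
            | exact absurd h.symm hins
            | omega
      | · simp only [Sum.inr.injEq, Prod.mk.injEq, Fin.mk.injEq] at h
          omega

/-- the `p`-th edge along the superedge replacing `e`. -/
def sE (hk : 4 ≤ k) (e : G.edgeSet) (p : Fin k) : Sym2 (V ⊕ G.edgeSet × Fin (k - 1)) :=
  s(vtx G k e p.val (by omega) hk, vtx G k e (p.val + 1) (by have := p.isLt; omega) hk)

lemma sE_mem (hk : 4 ≤ k) (e : G.edgeSet) (p : Fin k) :
    sE hk e p ∈ (subdivision G k).edgeSet := by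
  rw [sE, SimpleGraph.mem_edgeSet, subdivision, SimpleGraph.fromRel_adj]
  have hp := p.isLt
  constructor
  · intro h; exact absurd (vtx_inj h) (by omega)
  · rcases eq_or_ne p.val 0 with h0 | h0
    · rw [vtx_zero h0, vtx_mid (by omega) (by omega)]
      exact Or.inl (Or.inl ⟨by show p.val + 1 - 1 = 0; omega, rfl⟩)
    · rcases eq_or_ne (p.val + 1) k with hke | hke
      · rw [vtx_mid h0 (by omega), vtx_last hke]
        exact Or.inr (Or.inr ⟨by show p.val - 1 = k - 2; omega, rfl⟩)
      · rw [vtx_mid h0 (by omega), vtx_mid (by omega) hke]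
        exact Or.inl ⟨rfl, by show p.val - 1 + 1 = p.val + 1 - 1; omega⟩

lemma sE_inj (hk : 4 ≤ k) {e e' : G.edgeSet} {p p' : Fin k}
    (h : sE hk e p = sE hk e' p') : e = e' ∧ p = p' := by
  have hp := p.isLt; have hp' := p'.isLt
  rw [sE, sE, Sym2.eq_iff] at h
  rcases h with ⟨hA, hB⟩ | ⟨hA, hB⟩
  · rcases eq_or_ne p.val 0 with h0 | h0
    · have hp'0 : p'.val = 0 := by
        by_contra hne
        obtain ⟨_, h2⟩ := vtx_internal (Nat.pos_of_ne_zero hne) hp' hA.symm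
        omega
      obtain ⟨he, _⟩ := vtx_internal (i := p.val + 1) (by omega) (by omega) hB
      exact ⟨he, Fin.ext (by omega)⟩
    · obtain ⟨he, hpe⟩ := vtx_internal (Nat.pos_of_ne_zero h0) hp hA
      exact ⟨he, Fin.ext hpe⟩
  · exfalso
    rcases eq_or_ne p.val 0 with h0 | h0
    · rcases eq_or_ne (p'.val + 1) k with hke | hke
      · obtain ⟨he, h1p⟩ := vtx_internal (i := p.val + 1) (by omega) (by omega) hB
        omega
      · obtain ⟨_, habs⟩ := vtx_internal (i := p'.val + 1) (by omega) (by omega) hA.symm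
        omega
    · obtain ⟨he, hpe⟩ := vtx_internal (Nat.pos_of_ne_zero h0) hp hA
      subst he
      have := vtx_inj hB
      omega

lemma sE_surj (hk : 4 ≤ k) {a b : V ⊕ G.edgeSet × Fin (k - 1)}
    (h : (subdivision G k).Adj a b) : ∃ e p, sE hk e p = s(a, b) := by
  rw [subdivision, SimpleGraph.fromRel_adj] at h
  obtain ⟨hne, h⟩ := h
  have key : ∀ (a b : V ⊕ G.edgeSet × Fin (k - 1)),
      (match a, b with
        | .inl u, .inl w => k = 1 ∧ G.Adj u w
        | .inl u, .inr (e, l) =>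
            ((l : ℕ) = 0 ∧ u = Sym2.inf (e : Sym2 V)) ∨
            ((l : ℕ) = k - 2 ∧ u = Sym2.sup (e : Sym2 V))
        | .inr _, .inl _ => False
        | .inr (e, l), .inr (e', l') => e = e' ∧ (l : ℕ) + 1 = (l' : ℕ)) →
      ∃ e p, sE hk e p = s(a, b) := by
    intro a b h
    rcases a with u | ⟨e, l⟩ <;> rcases b with w | ⟨e', l'⟩ <;> simp only [] at h
    · omega
    · have hl' := l'.isLt
      rcases h with ⟨hl, hu⟩ | ⟨hl, hu⟩
      · refine ⟨e', ⟨0, by omega⟩, ?_⟩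
        rw [sE, vtx_zero rfl, vtx_mid (by first | omega | (simp; omega) | simp) (by first | omega | (simp; omega) | simp), Sym2.eq_iff]
        left
        refine ⟨by rw [hu], ?_⟩
        simp only [Sum.inr.injEq, Prod.mk.injEq, Fin.ext_iff, Fin.val_mk, true_and]
        omega
      · refine ⟨e', ⟨k - 1, by omega⟩, ?_⟩
        rw [sE, vtx_mid (by first | omega | (simp; omega) | simp) (by first | omega | (simp; omega) | simp), vtx_last (by first | omega | (simp; omega) | simp),
          Sym2.eq_iff]
        right
        refine ⟨?_, by rw [hu]⟩
        simp only [Sum.inr.injEq, Prod.mk.injEq, Fin.ext_iff, Fin.val_mk, true_and]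
        omega
    · obtain ⟨he, hl⟩ := h
      subst he
      have hl' := l'.isLt
      refine ⟨e, ⟨l'.val, by omega⟩, ?_⟩
      rw [sE, vtx_mid (by first | omega | (simp; omega) | simp) (by first | omega | (simp; omega) | simp), vtx_mid (by first | omega | (simp; omega) | simp) (by first | omega | (simp; omega) | simp),
        Sym2.eq_iff]
      left
      constructor <;>
        · simp only [Sum.inr.injEq, Prod.mk.injEq, Fin.ext_iff, Fin.val_mk, true_and]
          omega
  rcases h with h | h
  · exact key a b h
  · obtain ⟨e, p, hep⟩ := key b a h
    exact ⟨e, p, hep.trans Sym2.eq_swap⟩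

end Subdiv

section PathG
variable {k : ℕ}

/-- the `p`-th edge of the path graph on `k+1` vertices -/
def pE (k : ℕ) (p : Fin k) : Sym2 (Fin (k + 1)) :=
  s(⟨p.val, by omega⟩, ⟨p.val + 1, by have := p.isLt; omega⟩)

lemma pE_mem (p : Fin k) : pE k p ∈ (pathGraph (k + 1)).edgeSet := by
  rw [pE, SimpleGraph.mem_edgeSet, pathGraph_adj]
  left; rfl

lemma pE_inj {p p' : Fin k} (h : pE k p = pE k p') : p = p' := by
  rw [pE, pE, Sym2.eq_iff] at h
  rcases h with ⟨h1, h2⟩ | ⟨h1, h2⟩ <;>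
    · rw [Fin.ext_iff] at h1 h2
      simp only [Fin.val_mk] at h1 h2
      exact Fin.ext (by omega)

lemma pE_surj {z : Sym2 (Fin (k + 1))} (hz : z ∈ (pathGraph (k + 1)).edgeSet) :
    ∃ p, pE k p = z := by
  induction z using Sym2.ind with
  | _ u v =>
    rw [SimpleGraph.mem_edgeSet, pathGraph_adj] at hz
    have hu := u.isLt
    have hv := v.isLt
    rcases hz with h | h
    · refine ⟨⟨u.val, by omega⟩, ?_⟩
      rw [pE, Sym2.eq_iff]
      left
      exact ⟨Fin.ext rfl, Fin.ext (by simp only [Fin.val_mk]; omega)⟩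
    · refine ⟨⟨v.val, by omega⟩, ?_⟩
      rw [pE, Sym2.eq_iff]
      right
      exact ⟨Fin.ext rfl, Fin.ext (by simp only [Fin.val_mk]; omega)⟩

end PathG


section Glue
variable {V : Type*} [LinearOrder V] {G : SimpleGraph V} {k : ℕ}

lemma vtx_congr {e : G.edgeSet} {i i' : ℕ} (hii : i = i') (hi : i ≤ k) (hi' : i' ≤ k)
    (hk : 4 ≤ k) : vtx G k e i hi hk = vtx G k e i' hi' hk := by subst hii; rfl

lemma sE_surj' (hk : 4 ≤ k) {z : Sym2 (V ⊕ G.edgeSet × Fin (k - 1))}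
    (hz : z ∈ (subdivision G k).edgeSet) : ∃ e p, sE hk e p = z := by
  revert hz
  induction z using Sym2.ind with
  | _ a b => exact fun hz => sE_surj hk hz

/-- The parametrization of the edges of the subdivision. -/
noncomputable def ψsub (G : SimpleGraph V) (hk : 4 ≤ k) :
    G.edgeSet × Fin k ≃ ↥(subdivision G k).edgeSet :=
  Equiv.ofBijective (fun x => ⟨sE hk x.1 x.2, sE_mem hk x.1 x.2⟩)
    ⟨fun x y h => by
      obtain ⟨he, hp⟩ := sE_inj hk (congrArg Subtype.val h)
      exact Prod.ext he hp,
     fun f => by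
      obtain ⟨e, p, hep⟩ := sE_surj' hk f.2
      exact ⟨(e, p), Subtype.ext hep⟩⟩

lemma hAdj_sub (G : SimpleGraph V) (hk : 4 ≤ k) (e : G.edgeSet) (p q : Fin k)
    (hpq : (p : ℕ) + 1 = (q : ℕ)) :
    EdgeAdj (subdivision G k) (ψsub G hk (e, p)) (ψsub G hk (e, q)) := by
  constructor
  · intro h
    have := congrArg Prod.snd ((ψsub G hk).injective h)
    simp only at this
    rw [Fin.ext_iff] at this
    omega
  · refine ⟨vtx G k e ((p : ℕ) + 1) (by have := q.isLt; omega) hk, ?_, ?_⟩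
    · show _ ∈ sE hk e p
      rw [sE, Sym2.mem_iff]
      right; rfl
    · show _ ∈ sE hk e q
      rw [sE, Sym2.mem_iff]
      left
      exact vtx_congr hpq _ _ hk

lemma hSep_sub (G : SimpleGraph V) (hk : 4 ≤ k) (e : G.edgeSet) (p p' : Fin k)
    (h : EdgeAdj (subdivision G k) (ψsub G hk (e, p)) (ψsub G hk (e, p'))) :
    (p : ℕ) + 1 = (p' : ℕ) ∨ (p' : ℕ) + 1 = (p : ℕ) := by
  obtain ⟨hne, v, hv1, hv2⟩ := h
  have hpp : (p : ℕ) ≠ (p' : ℕ) := by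
    intro hc
    exact hne (by rw [Fin.ext_iff.mpr hc])
  have hv1' : v ∈ sE hk e p := hv1
  have hv2' : v ∈ sE hk e p' := hv2
  rw [sE, Sym2.mem_iff] at hv1' hv2'
  rcases hv1' with rfl | rfl <;> rcases hv2' with h2 | h2 <;> have := vtx_inj h2 <;> omega

/-- The parametrization of the edges of the path graph. -/
noncomputable def ψpath (k : ℕ) : Unit × Fin k ≃ ↥(pathGraph (k + 1)).edgeSet :=
  Equiv.ofBijective (fun x => ⟨pE k x.2, pE_mem x.2⟩)
    ⟨fun x y h => Prod.ext (Subsingleton.elim _ _) (pE_inj (congrArg Subtype.val h)),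
     fun f => by
      obtain ⟨p, hp⟩ := pE_surj f.2
      exact ⟨((), p), Subtype.ext hp⟩⟩

lemma hAdj_path (k : ℕ) (e : Unit) (p q : Fin k) (hpq : (p : ℕ) + 1 = (q : ℕ)) :
    EdgeAdj (pathGraph (k + 1)) (ψpath k (e, p)) (ψpath k (e, q)) := by
  constructor
  · intro h
    have := congrArg Prod.snd ((ψpath k).injective h)
    simp only at this
    rw [Fin.ext_iff] at this
    omega
  · refine ⟨⟨(p : ℕ) + 1, by have := q.isLt; omega⟩, ?_, ?_⟩
    · show _ ∈ pE k p
      rw [pE, Sym2.mem_iff]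
      right; rfl
    · show _ ∈ pE k q
      rw [pE, Sym2.mem_iff]
      left
      exact Fin.ext (by simp only [Fin.val_mk]; omega)

lemma hSep_path (k : ℕ) (e : Unit) (p p' : Fin k)
    (h : EdgeAdj (pathGraph (k + 1)) (ψpath k (e, p)) (ψpath k (e, p'))) :
    (p : ℕ) + 1 = (p' : ℕ) ∨ (p' : ℕ) + 1 = (p : ℕ) := by
  obtain ⟨hne, v, hv1, hv2⟩ := h
  have hpp : (p : ℕ) ≠ (p' : ℕ) := by
    intro hc
    exact hne (by rw [Fin.ext_iff.mpr hc])
  have hv1' : v ∈ pE k p := hv1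
  have hv2' : v ∈ pE k p' := hv2
  rw [pE, Sym2.mem_iff] at hv1' hv2'
  rcases hv1' with rfl | rfl <;> rcases hv2' with h2 | h2 <;> rw [Fin.ext_iff] at h2 <;>
    simp only [Fin.val_mk] at h2 <;> omega

end Glue


/-- If `G` is connected with `m` edges, `k ≥ 4` and `k ≡ 0 (mod 4)`, then
`χ'_dom(G^{1/k}) = m · χ'_dom(P_{k+1})`. -/
theorem stmt_18 {V : Type*} [Fintype V] [LinearOrder V] (G : SimpleGraph V)
    (hG : G.Connected) (m : ℕ) (hm : m = G.edgeSet.ncard)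
    (k : ℕ) (hk : 4 ≤ k) (hk4 : k % 4 = 0) :
    domEdgeChrom (subdivision G k) =
      m * domEdgeChrom (SimpleGraph.pathGraph (k + 1)) := by
  classical
  have e1 : domEdgeChrom (subdivision G k) = m * (k / 2) := by
    refine main_calc hk hk4 (ψsub G hk) ?_ (hAdj_sub G hk) (hSep_sub G hk)
    rw [Nat.card_coe_set_eq]
    exact hm.symm
  have e2 : domEdgeChrom (SimpleGraph.pathGraph (k + 1)) = 1 * (k / 2) := by
    refine main_calc hk hk4 (ψpath k) ?_ (hAdj_path k) (hSep_path k)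
    exact Nat.card_unique
  rw [e1, e2]
  ring
end
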